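/- (Duhamel perturbation series.) For all x, y ∈ A, the family (Iₙ)_{n≥0} has sum exp(x+y) (the series Σ_{n≥0} Iₙ converges in A to exp(x+y)), where I₀ = exp(x) and, for n ≥ 1, Iₙ = ∫_{Δₙ} exp((1−(s₁+⋯+sₙ))·x)·y·exp(s₁·x)·y·exp(s₂·x)⋯y·exp(sₙ·x) ds₁⋯dsₙ, the integral being over the standard simplex Δₙ = {(s₁,…,sₙ) ∈ ℝⁿ : sᵢ ≥ 0 for all i, s₁+⋯+sₙ ≤ 1}. -/

import Mathlib

open MeasureTheory

/-- The `n`-th Duhamel term `Iₙ`: `I₀ = exp(x)` and, for `n ≥ 1`,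
`Iₙ = ∫_{Δₙ} exp((1−(s₁+⋯+sₙ))·x)·y·exp(s₁·x)·y·exp(s₂·x)⋯y·exp(sₙ·x) ds₁⋯dsₙ`,
a Bochner integral over the standard simplex
`Δₙ = {(s₁,…,sₙ) ∈ ℝⁿ : sᵢ ≥ 0 for all i, s₁+⋯+sₙ ≤ 1}` with Lebesgue measure. -/
noncomputable def duhamelTerm {A : Type*} [NormedRing A] [NormedAlgebra ℂ A]
    [CompleteSpace A] (x y : A) : ℕ → A
  | 0 => NormedSpace.exp x
  | (n + 1) =>
    ∫ s in {s : Fin (n + 1) → ℝ | (∀ i, 0 ≤ s i) ∧ ∑ i, s i ≤ 1},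
      NormedSpace.exp ((1 - ∑ i, s i) • x) *
        (List.ofFn fun i : Fin (n + 1) => y * NormedSpace.exp (s i • x)).prod

/-!
Write `Fₙ(z) = ∫_{Δₙ} exp((1 - ∑ sᵢ)•z) * y * exp(s₁•x) * ⋯ * y * exp(sₙ•x) ds`
(`duhamelIntegral z x y n`), so that `Iₙ = Fₙ(x)`. Slicing `Δₙ₊₁` along `s₁` and applying the
one-variable Duhamel formula `exp(c•z) - exp(c•x) = ∫₀ᶜ exp((c-t)•z) * (z - x) * exp(t•x) dt`
with `z = x + y` gives `Fₙ(x + y) = Fₙ(x) + Fₙ₊₁(x + y)`, hence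
`∑_{k<n} Iₖ = exp(x + y) - Fₙ(x + y)`. Since `Δₙ` has volume `1/n!`, `‖Fₙ(z)‖ ≤ C cⁿ/n!`,
so the series converges absolutely and the remainder tends to zero.
-/

open Set NormedSpace
open scoped Nat

def cornerSimplex (n : ℕ) : Set (Fin n → ℝ) := {s | (∀ i, 0 ≤ s i) ∧ ∑ i, s i ≤ 1}

section CornerSimplex

variable {n : ℕ} {s : Fin n → ℝ}

theorem isClosed_cornerSimplex (n : ℕ) : IsClosed (cornerSimplex n) := by
  simp only [cornerSimplex, ofPred_and, ofPred_forall]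
  exact (isClosed_iInter fun i => isClosed_le continuous_const (continuous_apply i)).inter
    (isClosed_le (continuous_finsetSum _ fun i _ => continuous_apply i) continuous_const)

theorem measurableSet_cornerSimplex (n : ℕ) : MeasurableSet (cornerSimplex n) :=
  (isClosed_cornerSimplex n).measurableSet

theorem cornerSimplex_zero : cornerSimplex 0 = univ := by
  ext s
  simp [cornerSimplex]

theorem mem_Icc_of_mem_cornerSimplex (hs : s ∈ cornerSimplex n) (i : Fin n) : s i ∈ Icc 0 1 :=
  ⟨hs.1 i, (Finset.single_le_sum (fun j _ => hs.1 j) (Finset.mem_univ i)).trans hs.2⟩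

theorem one_sub_sum_mem_Icc_of_mem_cornerSimplex (hs : s ∈ cornerSimplex n) :
    1 - ∑ i, s i ∈ Icc 0 1 :=
  ⟨sub_nonneg.2 hs.2, sub_le_self _ (Finset.sum_nonneg fun i _ => hs.1 i)⟩

theorem isCompact_cornerSimplex (n : ℕ) : IsCompact (cornerSimplex n) :=
  isCompact_Icc.of_isClosed_subset (isClosed_cornerSimplex n)
    fun _ hs => ⟨fun i => (mem_Icc_of_mem_cornerSimplex hs i).1,
      fun i => (mem_Icc_of_mem_cornerSimplex hs i).2⟩

theorem cons_mem_cornerSimplex_iff {t : ℝ} :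
    Fin.cons t s ∈ cornerSimplex (n + 1) ↔ s ∈ cornerSimplex n ∧ t ∈ Icc 0 (1 - ∑ i, s i) := by
  simp only [cornerSimplex, mem_ofPred_eq, Fin.forall_fin_succ, Fin.cons_zero, Fin.cons_succ,
    Fin.sum_cons, mem_Icc, le_sub_iff_add_le]
  constructor
  · rintro ⟨⟨ht, hs⟩, hsum⟩
    exact ⟨⟨hs, by linarith⟩, ht, hsum⟩
  · rintro ⟨⟨hs, -⟩, ht, hsum⟩
    exact ⟨⟨ht, hs⟩, hsum⟩

theorem setIntegral_cornerSimplex_succ {E : Type*} [NormedAddCommGroup E] [NormedSpace ℝ E]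
    {g : (Fin (n + 1) → ℝ) → E} (hg : IntegrableOn g (cornerSimplex (n + 1))) :
    ∫ u in cornerSimplex (n + 1), g u =
      ∫ s in cornerSimplex n, ∫ t in (0)..(1 - ∑ i, s i), g (Fin.cons t s) := by
  let e := (MeasurableEquiv.piFinSuccAbove (fun _ : Fin (n + 1) => ℝ) 0).symm
  have he : MeasurePreserving e (volume.prod volume) volume :=
    (volume_preserving_piFinSuccAbove (fun _ : Fin (n + 1) => ℝ) 0).symm
  have he_apply : ∀ p, e p = Fin.cons p.1 p.2 := fun p => by
    simp [e, MeasurableEquiv.piFinSuccAbove_symm_apply, Fin.insertNthEquiv]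
  have hind : ∀ t s, (cornerSimplex (n + 1)).indicator g (Fin.cons t s) =
      (cornerSimplex n).indicator
        (fun s => (Icc 0 (1 - ∑ i, s i)).indicator (fun t => g (Fin.cons t s)) t) s := by
    intro t s
    by_cases hs : s ∈ cornerSimplex n <;> by_cases ht : t ∈ Icc 0 (1 - ∑ i, s i) <;>
      simp [indicator, cons_mem_cornerSimplex_iff, hs, ht]
  have hint : Integrable (fun p : ℝ × (Fin n → ℝ) => (cornerSimplex (n + 1)).indicator g (e p))
      (volume.prod volume) :=
    (he.integrable_comp_emb e.measurableEmbedding).2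
      ((integrable_indicator_iff (measurableSet_cornerSimplex _)).2 hg)
  rw [← integral_indicator (measurableSet_cornerSimplex _), ← he.integral_comp',
    integral_prod_symm _ hint, ← integral_indicator (measurableSet_cornerSimplex _)]
  refine integral_congr_ae (ae_of_all _ fun s => ?_)
  simp only [he_apply, hind]
  by_cases hs : s ∈ cornerSimplex n
  · simp only [indicator_of_mem hs]
    rw [integral_indicator measurableSet_Icc, integral_Icc_eq_integral_Ioc,
      intervalIntegral.integral_of_le (one_sub_sum_mem_Icc_of_mem_cornerSimplex hs).1]
  · simp [indicator_of_notMem hs]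

theorem continuous_one_sub_sum_pow (n k : ℕ) :
    Continuous fun s : Fin n → ℝ => (1 - ∑ i, s i) ^ k :=
  (continuous_const.sub (continuous_finsetSum _ fun i _ => continuous_apply i)).pow k

theorem integral_cornerSimplex_one_sub_sum_pow (n k : ℕ) :
    ∫ s in cornerSimplex n, (1 - ∑ i, s i) ^ k = (k ! : ℝ) / (n + k)! := by
  induction n generalizing k with
  | zero => simp [cornerSimplex_zero, (Nat.factorial_pos k).ne', Measure.real, volume_pi]
  | succ n ih =>
    have hslice : ∀ s ∈ cornerSimplex n,
        ∫ t in (0)..(1 - ∑ i, s i), (1 - ∑ i, (Fin.cons t s : Fin (n + 1) → ℝ) i) ^ k =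
          (1 - ∑ i, s i) ^ (k + 1) / (k + 1) := by
      intro s _
      simp only [Fin.sum_cons, sub_add_eq_sub_sub_swap]
      rw [intervalIntegral.integral_comp_sub_left (fun u => u ^ k), sub_self, integral_pow]
      ring
    rw [setIntegral_cornerSimplex_succ ((continuous_one_sub_sum_pow _ k).continuousOn
        |>.integrableOn_compact (isCompact_cornerSimplex _)),
      setIntegral_congr_fun (measurableSet_cornerSimplex n) hslice, integral_div, ih,
      show n + 1 + k = n + (k + 1) by ring, Nat.factorial_succ]
    push_cast
    field_simp

theorem measureReal_cornerSimplex (n : ℕ) : volume.real (cornerSimplex n) = 1 / n ! := by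
  simpa using integral_cornerSimplex_one_sub_sum_pow n 0

end CornerSimplex

theorem norm_mul_prod_ofFn_le {A : Type*} [NormedRing A] {n : ℕ} (a : A) (f : Fin n → A)
    {c : ℝ} (hf : ∀ i, ‖f i‖ ≤ c) : ‖a * (List.ofFn f).prod‖ ≤ ‖a‖ * c ^ n := by
  rw [← List.prod_cons]
  refine (List.norm_prod_le' (List.cons_ne_nil _ _)).trans ?_
  rw [List.map_cons, List.prod_cons, List.map_ofFn, List.prod_ofFn]
  refine mul_le_mul_of_nonneg_left ?_ (norm_nonneg a)
  simpa using
    Finset.prod_le_prod (s := Finset.univ) (fun i _ => norm_nonneg (f i)) fun i _ => hf i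

section Duhamel

variable {A : Type*} [NormedRing A] [NormedAlgebra ℝ A] [CompleteSpace A]

theorem continuous_exp_smul (x : A) : Continuous fun t : ℝ => exp (t • x) :=
  continuous_iff_continuousAt.2 fun t => (hasDerivAt_exp_smul_const x t).continuousAt

theorem exp_smul_mul_sub_exp_smul_mul_eq_integral (x z w : A) (c : ℝ) :
    exp (c • z) * w - exp (c • x) * w =
      ∫ t in (0)..c, exp ((c - t) • z) * (z - x) * exp (t • x) * w := by
  have hderiv : ∀ t, HasDerivAt (fun t : ℝ => exp ((c - t) • z) * exp (t • x) * w)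
      (-(exp ((c - t) • z) * (z - x) * exp (t • x) * w)) t := by
    intro t
    have hz : HasDerivAt (fun t : ℝ => exp ((c - t) • z)) (-(exp ((c - t) • z) * z)) t := by
      simpa [Function.comp_def] using
        (hasDerivAt_exp_smul_const z (c - t)).scomp t ((hasDerivAt_id t).const_sub c)
    convert (hz.mul (hasDerivAt_exp_smul_const' x t)).mul_const w using 1
    · rfl
    · noncomm_ring
  have hcont : Continuous fun t : ℝ => exp ((c - t) • z) * (z - x) * exp (t • x) * w :=
    ((((continuous_exp_smul z).comp (continuous_sub_left c)).mul continuous_const).mul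
      (continuous_exp_smul x)).mul continuous_const
  rw [← neg_sub, ← neg_neg (∫ t in (0)..c, _), ← intervalIntegral.integral_neg,
    intervalIntegral.integral_eq_sub_of_hasDerivAt (fun t _ => hderiv t)
      (hcont.neg.intervalIntegrable 0 c)]
  simp

noncomputable def duhamelIntegrand (z x y : A) (n : ℕ) (s : Fin n → ℝ) : A :=
  exp ((1 - ∑ i, s i) • z) * (List.ofFn fun i => y * exp (s i • x)).prod

noncomputable def duhamelIntegral (z x y : A) (n : ℕ) : A :=
  ∫ s in cornerSimplex n, duhamelIntegrand z x y n s

theorem continuous_duhamelIntegrand (z x y : A) (n : ℕ) :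
    Continuous (duhamelIntegrand z x y n) := by
  refine ((continuous_exp_smul z).comp
    (continuous_const.sub (continuous_finsetSum _ fun i _ => continuous_apply i))).mul ?_
  simp_rw [List.ofFn_eq_map]
  exact continuous_list_prod _ fun i _ =>
    continuous_const.mul ((continuous_exp_smul x).comp (continuous_apply i))

theorem integrableOn_duhamelIntegrand (z x y : A) (n : ℕ) :
    IntegrableOn (duhamelIntegrand z x y n) (cornerSimplex n) :=
  (continuous_duhamelIntegrand z x y n).continuousOn.integrableOn_compact
    (isCompact_cornerSimplex n)

theorem duhamelIntegral_zero (z x y : A) : duhamelIntegral z x y 0 = exp z := by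
  simp [duhamelIntegral, duhamelIntegrand, cornerSimplex_zero, Measure.real, volume_pi]

theorem duhamelIntegral_add_succ (x y : A) (n : ℕ) :
    duhamelIntegral (x + y) x y n =
      duhamelIntegral x x y n + duhamelIntegral (x + y) x y (n + 1) := by
  rw [← sub_eq_iff_eq_add', duhamelIntegral, duhamelIntegral, duhamelIntegral,
    ← integral_sub (integrableOn_duhamelIntegrand _ x y n)
      (integrableOn_duhamelIntegrand x x y n),
    setIntegral_cornerSimplex_succ (integrableOn_duhamelIntegrand _ x y (n + 1))]
  refine setIntegral_congr_fun (measurableSet_cornerSimplex n) fun s _ => ?_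
  simp only [duhamelIntegrand, exp_smul_mul_sub_exp_smul_mul_eq_integral, add_sub_cancel_left]
  congr 1 with t
  simp only [Fin.sum_cons, List.ofFn_succ, Fin.cons_zero, Fin.cons_succ, List.prod_cons,
    sub_add_eq_sub_sub_swap, mul_assoc]

theorem summable_norm_duhamelIntegral (z x y : A) :
    Summable fun n => ‖duhamelIntegral z x y n‖ := by
  obtain ⟨Mz, hMz⟩ := (isCompact_Icc : IsCompact (Icc (0 : ℝ) 1)).exists_bound_of_continuousOn
    (continuous_exp_smul z).continuousOn
  obtain ⟨Mx, hMx⟩ := (isCompact_Icc : IsCompact (Icc (0 : ℝ) 1)).exists_bound_of_continuousOn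
    (continuous_exp_smul x).continuousOn
  have hbound : ∀ n, ∀ s ∈ cornerSimplex n,
      ‖duhamelIntegrand z x y n s‖ ≤ Mz * (‖y‖ * Mx) ^ n := by
    intro n s hs
    have hfactor : ∀ i, ‖y * exp (s i • x)‖ ≤ ‖y‖ * Mx := fun i =>
      (norm_mul_le _ _).trans (mul_le_mul_of_nonneg_left
        (hMx _ (mem_Icc_of_mem_cornerSimplex hs i)) (norm_nonneg y))
    refine (norm_mul_prod_ofFn_le _ _ hfactor).trans (mul_le_mul_of_nonneg_right
      (hMz _ (one_sub_sum_mem_Icc_of_mem_cornerSimplex hs)) (pow_nonneg ?_ n))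
    exact mul_nonneg (norm_nonneg y) ((norm_nonneg _).trans (hMx 0 ⟨le_rfl, zero_le_one⟩))
  refine .of_nonneg_of_le (fun n => norm_nonneg _) (fun n => ?_)
    ((Real.summable_pow_div_factorial (‖y‖ * Mx)).mul_left Mz)
  calc ‖duhamelIntegral z x y n‖ ≤ Mz * (‖y‖ * Mx) ^ n * volume.real (cornerSimplex n) :=
        norm_setIntegral_le_of_norm_le_const (isCompact_cornerSimplex n).measure_lt_top
          (hbound n)
    _ = Mz * ((‖y‖ * Mx) ^ n / n !) := by rw [measureReal_cornerSimplex]; ring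

theorem sum_range_duhamelIntegral (x y : A) (n : ℕ) :
    ∑ k ∈ Finset.range n, duhamelIntegral x x y k =
      exp (x + y) - duhamelIntegral (x + y) x y n := by
  induction n with
  | zero => simp [duhamelIntegral_zero]
  | succ n ih =>
    rw [Finset.sum_range_succ, ih, duhamelIntegral_add_succ x y n]
    abel

theorem hasSum_duhamelIntegral (x y : A) :
    HasSum (fun n => duhamelIntegral x x y n) (exp (x + y)) := by
  rw [hasSum_iff_tendsto_nat_of_summable_norm (summable_norm_duhamelIntegral x x y)]
  simp_rw [sum_range_duhamelIntegral]
  simpa using tendsto_const_nhds.sub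
    (summable_norm_duhamelIntegral (x + y) x y).of_norm.tendsto_atTop_zero

end Duhamel

/-- **Duhamel perturbation series.**
`A` is a unital complex Banach algebra and `exp(x) = Σ_{n≥0} xⁿ/n!`.  For all `x, y ∈ A`,
the family `(Iₙ)_{n≥0}` of Duhamel terms has sum `exp(x+y)`: the series `Σ_{n≥0} Iₙ`
converges in `A` to `exp(x+y)`.  (Applied with `x = −tD²` and `y = −t[D,ρ(·)]`, this is the
expansion of the heat operator `e^{−t𝐃²}` of the superconnection `𝐃` defining the JLO
cocycle.) -/
theorem duhamel_perturbation_series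
    {A : Type*} [NormedRing A] [NormedAlgebra ℂ A] [CompleteSpace A] (x y : A) :
    HasSum (duhamelTerm x y) (NormedSpace.exp (x + y)) := by
  have hterm : duhamelTerm x y = fun n => duhamelIntegral x x y n := by
    funext n
    cases n with
    | zero => exact (duhamelIntegral_zero x x y).symm
    | succ n => rfl
  rw [hterm]
  exact hasSum_duhamelIntegral x y
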